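/- Let n, m ≥ 1 and let f, g, h be measurable functions on ℝ^n × ℝ^m. Then ‖f·g·h‖_{L¹(ℝ^{n+m})} ≤ 2·‖f‖_{X₁}·‖g‖_{X*}·‖ |x|·h ‖_{L^∞}, where |x| denotes the norm of the x-component. In particular, taking h to be the indicator function of {|x| ≤ R}, ‖f·g‖_{L¹({(x,y) : |x| ≤ R})} ≤ 2·R·‖f‖_{X₁}·‖g‖_{X*} for every R > 0. -/

import Mathlib

/-! Up to the null set `x = 0`, `ℝ^n × ℝ^m` is covered by the dyadic shells
`2^{j-1} ≤ |x| ≤ 2^j`. On the `j`-th shell `|h| ≤ 2^{1-j} ‖|x| h‖_∞`, and Cauchy–Schwarz bounds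
`∫ |f g|` there by `‖f‖_{L²(|x| ≤ 2^j)} ‖g‖_{L²(shell)} ≤ 2^{3j/2} ‖f‖_{X₁} ‖g‖_{L²(shell)}`.
Since `2^{1-j} 2^{3j/2} = 2 · 2^{j/2}`, summing over `j` gives `2 ‖f‖_{X₁} ‖g‖_{X*} ‖|x| h‖_∞`.
The local estimate is the case `h = 1_{|x| ≤ R}`, for which `‖|x| h‖_∞ ≤ R`. -/

open MeasureTheory ENNReal Real

noncomputable section

/-- Points of the waveguide ambient space `ℝ^n × ℝ^m`. -/
abbrev Pt (n m : ℕ) := EuclideanSpace ℝ (Fin n) × EuclideanSpace ℝ (Fin m)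

variable {n m : ℕ}

/-- `L²` norm over a subset of `ℝ^{n+m}`. -/
def L2 {F : Type*} [NormedAddCommGroup F] (f : Pt n m → F) (S : Set (Pt n m)) : ℝ≥0∞ :=
  eLpNorm f 2 (volume.restrict S)

/-- Morrey–Campanato norm `‖f‖_X = sup_{R>0} R^{-1/2} ‖f‖_{L²(|x|≤R)}`. -/
def normX {F : Type*} [NormedAddCommGroup F] (f : Pt n m → F) : ℝ≥0∞ :=
  ⨆ (R : ℝ) (_ : 0 < R), ENNReal.ofReal (R ^ (-(1:ℝ)/2)) * L2 f {p : Pt n m | ‖p.1‖ ≤ R}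

/-- Morrey–Campanato norm `‖f‖_{X₁} = sup_{R>0} R^{-3/2} ‖f‖_{L²(|x|≤R)}`. -/
def normX1 {F : Type*} [NormedAddCommGroup F] (f : Pt n m → F) : ℝ≥0∞ :=
  ⨆ (R : ℝ) (_ : 0 < R), ENNReal.ofReal (R ^ (-(3:ℝ)/2)) * L2 f {p : Pt n m | ‖p.1‖ ≤ R}

/-- Dual Morrey–Campanato norm
`‖f‖_{X*} = Σ_{j∈ℤ} 2^{j/2} ‖f‖_{L²(2^{j-1}≤|x|≤2^j)}`. -/
def normXstar {F : Type*} [NormedAddCommGroup F] (f : Pt n m → F) : ℝ≥0∞ :=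
  ∑' j : ℤ, ENNReal.ofReal ((2:ℝ) ^ ((j:ℝ)/2)) *
    L2 f {p : Pt n m | (2:ℝ)^(j-1) ≤ ‖p.1‖ ∧ ‖p.1‖ ≤ (2:ℝ)^j}

/-- Standard basis vector in the `x` variables. -/
def ex (n m : ℕ) (i : Fin n) : Pt n m := (EuclideanSpace.single i 1, 0)

/-- Standard basis vector in the `y` variables. -/
def ey (n m : ℕ) (i : Fin m) : Pt n m := (0, EuclideanSpace.single i 1)

/-- Laplacian in all `n+m` variables. -/
def lap (u : Pt n m → ℂ) (p : Pt n m) : ℂ :=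
  (∑ i : Fin n, fderiv ℝ (fun q => fderiv ℝ u q (ex n m i)) p (ex n m i)) +
  ∑ i : Fin m, fderiv ℝ (fun q => fderiv ℝ u q (ey n m i)) p (ey n m i)

/-- Pointwise euclidean norm of the gradient in the `x` variables only. -/
def gradXnorm (u : Pt n m → ℂ) (p : Pt n m) : ℝ :=
  Real.sqrt (∑ i : Fin n, ‖fderiv ℝ u p (ex n m i)‖^2)

/-- Pointwise squared euclidean norm of the full gradient. -/
def gradNormSq (u : Pt n m → ℂ) (p : Pt n m) : ℝ :=
  (∑ i : Fin n, ‖fderiv ℝ u p (ex n m i)‖^2) +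
  ∑ i : Fin m, ‖fderiv ℝ u p (ey n m i)‖^2

/-- The right hand side `f := -Δu - (λ+iε)u + Vu` of the resolvent equation. -/
def resf (V : Pt n m → ℝ) (lam eps : ℝ) (u : Pt n m → ℂ) : Pt n m → ℂ :=
  fun p => -lap u p - (lam + eps * Complex.I) * u p + (V p : ℂ) * u p

/-- A repulsive potential: nonnegative, continuous, `C¹` in `x` for `x ≠ 0`, and
`x·∇ₓ(|x| V) ≤ 0` for `x ≠ 0`. -/
structure IsRepulsive (V : Pt n m → ℝ) : Prop where
  nonneg : ∀ p, 0 ≤ V p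
  continuous : Continuous V
  cdiff : ∀ y : EuclideanSpace ℝ (Fin m), ContDiffOn ℝ 1 (fun x => V (x, y)) {x | x ≠ 0}
  repulsive : ∀ (x : EuclideanSpace ℝ (Fin n)) (y : EuclideanSpace ℝ (Fin m)), x ≠ 0 →
    fderiv ℝ (fun x' : EuclideanSpace ℝ (Fin n) => ‖x'‖ * V (x', y)) x x ≤ 0

open Set

section

variable {α : Type*} [MeasurableSpace α] {μ : Measure α}

lemma eLpNorm_one_le_tsum_restrict {E ι : Type*} [NormedAddCommGroup E] [Countable ι]
    {s : ι → Set α} (hs : ∀ᵐ x ∂μ, x ∈ ⋃ i, s i) (f : α → E) :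
    eLpNorm f 1 μ ≤ ∑' i, eLpNorm f 1 (μ.restrict (s i)) := by
  simp only [eLpNorm_one_eq_lintegral_enorm]
  calc ∫⁻ x, ‖f x‖ₑ ∂μ = ∫⁻ x in ⋃ i, s i, ‖f x‖ₑ ∂μ := by
        rw [Measure.restrict_eq_self_of_ae_mem hs]
    _ ≤ _ := lintegral_iUnion_le _ _

lemma eLpNorm_top_restrict_le_inv_mul_of_le_weight {E : Type*} [NormedAddCommGroup E]
    [NormedSpace ℝ E] {s : Set α} (hs : MeasurableSet s) {w : α → ℝ} {a : ℝ} (ha : 0 < a)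
    (haw : ∀ x ∈ s, a ≤ w x) (h : α → E) :
    eLpNorm h ⊤ (μ.restrict s) ≤ (ENNReal.ofReal a)⁻¹ * eLpNorm (fun x => w x • h x) ⊤ μ := by
  rw [← ENNReal.mul_le_iff_le_inv (by simpa using ha) ENNReal.ofReal_ne_top,
    ← Real.enorm_of_nonneg ha.le, ← eLpNorm_const_smul]
  calc eLpNorm (a • h) ⊤ (μ.restrict s)
      ≤ eLpNorm (fun x => w x • h x) ⊤ (μ.restrict s) := by
        refine eLpNorm_mono_ae ((ae_restrict_mem hs).mono fun x hx => ?_)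
        simp only [Pi.smul_apply, norm_smul, Real.norm_of_nonneg ha.le,
          Real.norm_of_nonneg (ha.le.trans (haw x hx))]
        gcongr
        exact haw x hx
    _ ≤ eLpNorm (fun x => w x • h x) ⊤ μ := eLpNorm_mono_measure _ Measure.restrict_le_self

lemma eLpNorm_smul_indicator_one_top_le {𝕜 : Type*} [NormedRing 𝕜] [NormOneClass 𝕜]
    [NormedSpace ℝ 𝕜] {w : α → ℝ} {s : Set α} {R : ℝ} (hR : 0 ≤ R)
    (hw : ∀ x ∈ s, |w x| ≤ R) :
    eLpNorm (fun x => w x • s.indicator (1 : α → 𝕜) x) ⊤ μ ≤ ENNReal.ofReal R := by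
  rw [eLpNorm_exponent_top]
  refine eLpNormEssSup_le_of_ae_bound (ae_of_all _ fun x => ?_)
  by_cases hx : x ∈ s
  · simpa [hx, norm_smul] using hw x hx
  · simpa [hx] using hR

end

lemma ofReal_two_zpow_rpow_mul_inv (j : ℤ) :
    ENNReal.ofReal (((2:ℝ) ^ j) ^ ((3:ℝ)/2)) * (ENNReal.ofReal ((2:ℝ) ^ (j - 1)))⁻¹ =
      2 * ENNReal.ofReal ((2:ℝ) ^ ((j:ℝ)/2)) := by
  have hreal : ((2:ℝ) ^ j) ^ ((3:ℝ)/2) * ((2:ℝ) ^ (j - 1))⁻¹ = 2 * (2:ℝ) ^ ((j:ℝ)/2) := by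
    rw [← Real.rpow_intCast, ← Real.rpow_intCast, ← Real.rpow_mul zero_le_two,
      ← Real.rpow_neg zero_le_two, ← Real.rpow_add two_pos,
      show (j:ℝ) * (3/2) + -((j - 1 : ℤ) : ℝ) = 1 + j/2 by push_cast; ring,
      Real.rpow_add two_pos, Real.rpow_one]
  rw [← ENNReal.ofReal_inv_of_pos (zpow_pos two_pos _), ← ENNReal.ofReal_mul (by positivity),
    hreal, ENNReal.ofReal_mul zero_le_two, ENNReal.ofReal_ofNat]

def dyadicShell (n m : ℕ) (j : ℤ) : Set (Pt n m) :=
  {p | (2:ℝ) ^ (j - 1) ≤ ‖p.1‖ ∧ ‖p.1‖ ≤ (2:ℝ) ^ j}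

lemma measurableSet_dyadicShell (j : ℤ) : MeasurableSet (dyadicShell n m j) :=
  (measurableSet_le measurable_const measurable_fst.norm).inter
    (measurableSet_le measurable_fst.norm measurable_const)

lemma normXstar_eq_tsum_dyadicShell {F : Type*} [NormedAddCommGroup F] (g : Pt n m → F) :
    normXstar g = ∑' j : ℤ, ENNReal.ofReal ((2:ℝ) ^ ((j:ℝ)/2)) * L2 g (dyadicShell n m j) :=
  rfl

lemma ae_mem_iUnion_dyadicShell (hn : 1 ≤ n) :
    ∀ᵐ p : Pt n m ∂volume, p ∈ ⋃ j, dyadicShell n m j := by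
  have : NeZero n := ⟨by omega⟩
  have hfst : ∀ᵐ p : Pt n m ∂volume, p.1 ≠ 0 := by
    rw [Measure.volume_eq_prod]
    exact Measure.quasiMeasurePreserving_fst.ae (Measure.ae_ne volume 0)
  filter_upwards [hfst] with p hp
  obtain ⟨k, hk⟩ := _root_.exists_mem_Ico_zpow (norm_pos_iff.2 hp) one_lt_two
  exact mem_iUnion.2 ⟨k + 1, by simpa using hk.1, hk.2.le⟩

lemma L2_le_ofReal_rpow_mul_normX1 {F : Type*} [NormedAddCommGroup F] (u : Pt n m → F)
    {R : ℝ} (hR : 0 < R) :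
    L2 u {p : Pt n m | ‖p.1‖ ≤ R} ≤ ENNReal.ofReal (R ^ ((3:ℝ)/2)) * normX1 u := by
  have hinv : ENNReal.ofReal (R ^ ((3:ℝ)/2)) = (ENNReal.ofReal (R ^ (-(3:ℝ)/2)))⁻¹ := by
    rw [← ENNReal.ofReal_inv_of_pos (by positivity), neg_div, Real.rpow_neg hR.le, inv_inv]
  rw [hinv, ← ENNReal.mul_le_iff_le_inv (by simp; positivity) ENNReal.ofReal_ne_top]
  exact le_iSup₂ (f := fun (R : ℝ) (_ : 0 < R) =>
    ENNReal.ofReal (R ^ (-(3:ℝ)/2)) * L2 u {p : Pt n m | ‖p.1‖ ≤ R}) R hR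

lemma eLpNorm_mul_mul_restrict_dyadicShell_le {f g : Pt n m → ℂ}
    (hf : AEStronglyMeasurable f volume) (hg : AEStronglyMeasurable g volume)
    (h : Pt n m → ℂ) (j : ℤ) :
    eLpNorm (fun p => f p * g p * h p) 1 (volume.restrict (dyadicShell n m j)) ≤
      2 * normX1 f * eLpNorm (fun p : Pt n m => ‖p.1‖ • h p) ⊤ volume *
        (ENNReal.ofReal ((2:ℝ) ^ ((j:ℝ)/2)) * L2 g (dyadicShell n m j)) := by
  set μ := volume.restrict (dyadicShell n m j)
  set M := eLpNorm (fun p : Pt n m => ‖p.1‖ • h p) ⊤ volume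
  have hf2 : eLpNorm f 2 μ ≤ ENNReal.ofReal (((2:ℝ) ^ j) ^ ((3:ℝ)/2)) * normX1 f :=
    (eLpNorm_mono_measure f (Measure.restrict_mono (fun p hp => hp.2) le_rfl)).trans
      (L2_le_ofReal_rpow_mul_normX1 f (zpow_pos two_pos j))
  have hh : eLpNorm h ⊤ μ ≤ (ENNReal.ofReal ((2:ℝ) ^ (j - 1)))⁻¹ * M :=
    eLpNorm_top_restrict_le_inv_mul_of_le_weight (measurableSet_dyadicShell j)
      (zpow_pos two_pos _) (fun p hp => hp.1) h
  calc eLpNorm (fun p => f p * g p * h p) 1 μ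
      ≤ eLpNorm (fun p => f p * g p) 1 μ * eLpNorm h ⊤ μ := by
        simpa using eLpNorm_le_eLpNorm_mul_eLpNorm_top 1 (f := fun p => f p * g p)
          (hf.mul hg).restrict h (· * ·) 1
          (ae_of_all _ fun p => by simp)
    _ ≤ eLpNorm f 2 μ * eLpNorm g 2 μ * eLpNorm h ⊤ μ := by
        gcongr
        exact eLpNorm_smul_le_mul_eLpNorm (φ := f) (f := g) (p := 2) (q := 2)
          hg.restrict hf.restrict
    _ ≤ ENNReal.ofReal (((2:ℝ) ^ j) ^ ((3:ℝ)/2)) * normX1 f * L2 g (dyadicShell n m j) *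
          ((ENNReal.ofReal ((2:ℝ) ^ (j - 1)))⁻¹ * M) := by
        gcongr; exact le_rfl
    _ = ENNReal.ofReal (((2:ℝ) ^ j) ^ ((3:ℝ)/2)) * (ENNReal.ofReal ((2:ℝ) ^ (j - 1)))⁻¹ *
          normX1 f * M * L2 g (dyadicShell n m j) := by ring
    _ = 2 * normX1 f * M * (ENNReal.ofReal ((2:ℝ) ^ ((j:ℝ)/2)) * L2 g (dyadicShell n m j)) := by
        rw [ofReal_two_zpow_rpow_mul_inv]; ring

lemma eLpNorm_mul_mul_le_normX1_mul_normXstar (hn : 1 ≤ n) {f g : Pt n m → ℂ}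
    (hf : AEStronglyMeasurable f volume) (hg : AEStronglyMeasurable g volume) (h : Pt n m → ℂ) :
    eLpNorm (fun p => f p * g p * h p) 1 volume ≤
      2 * normX1 f * normXstar g * eLpNorm (fun p : Pt n m => ‖p.1‖ • h p) ⊤ volume :=
  calc eLpNorm (fun p => f p * g p * h p) 1 volume
      ≤ ∑' j, eLpNorm (fun p => f p * g p * h p) 1 (volume.restrict (dyadicShell n m j)) :=
        eLpNorm_one_le_tsum_restrict (ae_mem_iUnion_dyadicShell hn) _
    _ ≤ ∑' j : ℤ, 2 * normX1 f * eLpNorm (fun p : Pt n m => ‖p.1‖ • h p) ⊤ volume *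
          (ENNReal.ofReal ((2:ℝ) ^ ((j:ℝ)/2)) * L2 g (dyadicShell n m j)) :=
        ENNReal.tsum_le_tsum fun j => eLpNorm_mul_mul_restrict_dyadicShell_le hf hg h j
    _ = _ := by rw [ENNReal.tsum_mul_left, ← normXstar_eq_tsum_dyadicShell]; ring

theorem X1_Xstar_weighted_general (n m : ℕ) (hn : 1 ≤ n)
    (f g h : Pt n m → ℂ) (hf : Measurable f) (hg : Measurable g) :
    eLpNorm (fun p => f p * g p * h p) 1 volume ≤
      2 * normX1 f * normXstar g * eLpNorm (fun p : Pt n m => ‖p.1‖ • h p) ⊤ volume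
    ∧ ∀ R : ℝ, 0 < R →
        eLpNorm (fun p => f p * g p) 1 (volume.restrict {p : Pt n m | ‖p.1‖ ≤ R}) ≤
          ENNReal.ofReal (2 * R) * normX1 f * normXstar g := by
  have hweighted := eLpNorm_mul_mul_le_normX1_mul_normXstar hn hf.aestronglyMeasurable
    hg.aestronglyMeasurable
  refine ⟨hweighted h, fun R hR => ?_⟩
  set S := {p : Pt n m | ‖p.1‖ ≤ R}
  have hS : MeasurableSet S := measurableSet_le measurable_fst.norm measurable_const
  calc eLpNorm (fun p => f p * g p) 1 (volume.restrict S)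
      = eLpNorm (fun p => f p * g p * S.indicator 1 p) 1 volume := by
        rw [← eLpNorm_indicator_eq_eLpNorm_restrict hS]
        congr 1 with p
        by_cases hp : p ∈ S <;> simp [hp]
    _ ≤ 2 * normX1 f * normXstar g *
          eLpNorm (fun p : Pt n m => ‖p.1‖ • S.indicator (1 : Pt n m → ℂ) p) ⊤ volume :=
        hweighted _
    _ ≤ 2 * normX1 f * normXstar g * ENNReal.ofReal R := by
        gcongr
        exact eLpNorm_smul_indicator_one_top_le hR.le fun p hp => by rw [abs_norm]; exact hp
    _ = ENNReal.ofReal (2 * R) * normX1 f * normXstar g := by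
        rw [ENNReal.ofReal_mul zero_le_two, ENNReal.ofReal_ofNat]; ring

/-- `‖fgh‖_{L¹} ≤ 2 ‖f‖_{X₁} ‖g‖_{X*} ‖|x|h‖_{L^∞}`, and in
particular `‖fg‖_{L¹(|x|≤R)} ≤ 2R ‖f‖_{X₁} ‖g‖_{X*}`. -/
theorem X1_Xstar_weighted (n m : ℕ) (hn : 1 ≤ n) (hm : 1 ≤ m)
    (f g h : Pt n m → ℂ) (hf : Measurable f) (hg : Measurable g) (hh : Measurable h) :
    eLpNorm (fun p => f p * g p * h p) 1 volume ≤
      2 * normX1 f * normXstar g * eLpNorm (fun p : Pt n m => ‖p.1‖ • h p) ⊤ volume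
    ∧ ∀ R : ℝ, 0 < R →
        eLpNorm (fun p => f p * g p) 1 (volume.restrict {p : Pt n m | ‖p.1‖ ≤ R}) ≤
          ENNReal.ofReal (2 * R) * normX1 f * normXstar g :=
  X1_Xstar_weighted_general n m hn f g h hf hg
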